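/- For the pure states u = (|00⟩ + |11⟩)/√2 and v = cos(π/8)|00⟩ + sin(π/8)|11⟩ in ℂ²⊗ℂ², and any quantum channel Φ on the first qubit, the probability ⟨vv*, (Φ⊗id)(uu*)⟩ is at most cos²(π/8). -/

import Mathlib

open Matrix
open scoped Kronecker ComplexOrder

noncomputable section

/-- `Φ ⊗ id` : apply a linear map `Φ` on `L(X)` to the first tensor factor of `L(X ⊗ Z)`. -/
def lmapTensorId {n m k : Type*} [Fintype n] [Fintype k]
    (Φ : Matrix n n ℂ →ₗ[ℂ] Matrix m m ℂ)
    (M : Matrix (n × k) (n × k) ℂ) : Matrix (m × k) (m × k) ℂ :=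
  fun p q => Φ (fun i j => M (i, p.2) (j, q.2)) p.1 q.1

/-- `id ⊗ Ψ` : apply a linear map `Ψ` on `L(Z)` to the second tensor factor of `L(Y ⊗ Z)`. -/
def idTensorLmap {n k l : Type*} [Fintype n] [Fintype k]
    (Ψ : Matrix k k ℂ →ₗ[ℂ] Matrix l l ℂ)
    (M : Matrix (n × k) (n × k) ℂ) : Matrix (n × l) (n × l) ℂ :=
  fun p q => Ψ (fun a b => M (p.1, a) (q.1, b)) p.2 q.2

/-- Complete positivity: `Φ ⊗ id_k` maps positive semidefinite operators to positive
semidefinite operators for every finite-dimensional ancilla `k`. -/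
def IsCompletelyPositive {n m : Type*} [Fintype n] [Fintype m]
    (Φ : Matrix n n ℂ →ₗ[ℂ] Matrix m m ℂ) : Prop :=
  ∀ (k : Type) [Fintype k] [DecidableEq k],
    ∀ M : Matrix (n × k) (n × k) ℂ, M.PosSemidef → (lmapTensorId Φ M).PosSemidef

def IsTracePreserving {n m : Type*} [Fintype n] [Fintype m]
    (Φ : Matrix n n ℂ →ₗ[ℂ] Matrix m m ℂ) : Prop :=
  ∀ M : Matrix n n ℂ, (Φ M).trace = M.trace

/-- Partial trace over the first tensor factor. -/
def trFst {n k : Type*} [Fintype n] (M : Matrix (n × k) (n × k) ℂ) : Matrix k k ℂ :=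
  fun a b => ∑ i : n, M (i, a) (i, b)

/-- Partial trace over the second tensor factor. -/
def trSnd {n k : Type*} [Fintype k] (M : Matrix (n × k) (n × k) ℂ) : Matrix n n ℂ :=
  fun i j => ∑ a : k, M (i, a) (j, a)

/-- Hilbert-Schmidt inner product `⟨A, B⟩ = Tr(A* B)`. -/
def minner {n : Type*} [Fintype n] (A B : Matrix n n ℂ) : ℂ := (Aᴴ * B).trace

/-- Old Mathlib's `Matrix.PosSemidef.sqrt` (removed since), restored verbatim. -/
def Matrix.PosSemidef.sqrt {n : Type*} [Fintype n] [DecidableEq n] {A : Matrix n n ℂ}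
    (hA : A.PosSemidef) : Matrix n n ℂ :=
  (hA.1.eigenvectorUnitary : Matrix n n ℂ) * diagonal ((↑) ∘ (Real.sqrt ∘ hA.1.eigenvalues)) *
    (star hA.1.eigenvectorUnitary : Matrix n n ℂ)

open Classical in
/-- Square root of a positive semidefinite matrix (junk value `0` otherwise). -/
def msqrt {n : Type*} [Fintype n] [DecidableEq n] (M : Matrix n n ℂ) : Matrix n n ℂ :=
  if h : M.PosSemidef then h.sqrt else 0

/-- Trace norm `‖M‖₁ = Tr √(M* M)`. -/
def traceNorm {n : Type*} [Fintype n] [DecidableEq n] (M : Matrix n n ℂ) : ℝ :=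
  ((Matrix.posSemidef_conjTranspose_mul_self M).sqrt.trace).re

/-- Fidelity `F(Q, R) = ‖√Q √R‖₁` of positive semidefinite matrices. -/
def fid {n : Type*} [Fintype n] [DecidableEq n] (Q R : Matrix n n ℂ) : ℝ :=
  traceNorm (msqrt Q * msqrt R)

/-- Choi-Jamiolkowski operator `J(Φ) = Σ_{i,j} Φ(|i⟩⟨j|) ⊗ |i⟩⟨j|`. -/
def choi {n m : Type*} [Fintype n] [DecidableEq n] [Fintype m]
    (Φ : Matrix n n ℂ →ₗ[ℂ] Matrix m m ℂ) : Matrix (m × n) (m × n) ℂ :=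
  fun p q => Φ (Matrix.single p.2 q.2 1) p.1 q.1

/-- Tensor product of vectors. -/
def tensorVec {α β : Type*} (v : α → ℂ) (w : β → ℂ) : α × β → ℂ := fun p => v p.1 * w p.2

/-- `u = (|00⟩ + |11⟩)/√2`. -/
def uVec : Fin 2 × Fin 2 → ℂ := fun p =>
  if p = (0, 0) then (Real.sqrt 2 : ℂ)⁻¹ else if p = (1, 1) then (Real.sqrt 2 : ℂ)⁻¹ else 0

/-- `v = cos(π/8)|00⟩ + sin(π/8)|11⟩`. -/
def vVec : Fin 2 × Fin 2 → ℂ := fun p =>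
  if p = (0, 0) then (Real.cos (Real.pi / 8) : ℂ)
  else if p = (1, 1) then (Real.sin (Real.pi / 8) : ℂ) else 0

/-- `w = -sin(π/8)|00⟩ + cos(π/8)|11⟩`. -/
def wVec : Fin 2 × Fin 2 → ℂ := fun p =>
  if p = (0, 0) then -(Real.sin (Real.pi / 8) : ℂ)
  else if p = (1, 1) then (Real.cos (Real.pi / 8) : ℂ) else 0

/-!
Write `c = cos(π/8)`, `s = sin(π/8)` and `ρ = (Φ ⊗ id)(uu*)`. Complete positivity makes `ρ`
positive semidefinite, and trace preservation makes its marginal on `Z` equal to that of `uu*`,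
namely `I/2`. Hence `ρ₀₀,₀₀, ρ₁₁,₁₁ ≤ 1/2`, while positivity of `ρ` on `|00⟩ - |11⟩` gives
`Re (ρ₀₀,₁₁ + ρ₁₁,₀₀) ≤ ρ₀₀,₀₀ + ρ₁₁,₁₁`. Therefore
`⟨v, ρ v⟩ ≤ c (c + s) ρ₀₀,₀₀ + s (c + s) ρ₁₁,₁₁ ≤ (c + s)² / 2 = cos²(π/8)`,
the last equality being `sin(π/4) = cos(π/4)`.
-/

open Real

namespace Matrix

variable {n k : Type*} [Fintype n]

lemma minner_vecMulVec_self_star (v : n → ℂ) (A : Matrix n n ℂ) :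
    minner (vecMulVec v (star v)) A = star v ⬝ᵥ A *ᵥ v := by
  rw [minner, (posSemidef_vecMulVec_self_star v).1.eq, vecMulVec_mul, trace_vecMulVec,
    dotProduct_comm, dotProduct_mulVec]

lemma PosSemidef.re_apply_add_re_apply_le [DecidableEq n] {A : Matrix n n ℂ}
    (hA : A.PosSemidef) (i j : n) :
    (A i j).re + (A j i).re ≤ (A i i).re + (A j j).re := by
  have h := Complex.nonneg_iff.1 (hA.dotProduct_mulVec_nonneg (Pi.single i 1 - Pi.single j 1))
  simp only [star_sub, Pi.star_single, star_one, mulVec_sub, dotProduct_sub, sub_dotProduct,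
    mulVec_single_one, single_one_dotProduct, col_apply, Complex.sub_re] at h
  linarith [h.1]

lemma PosSemidef.apply_le_trFst {ρ : Matrix (n × k) (n × k) ℂ} (hρ : ρ.PosSemidef)
    (i : n) (a : k) : ρ (i, a) (i, a) ≤ trFst ρ a a :=
  Finset.single_le_sum (f := fun j => ρ (j, a) (j, a)) (fun _ _ => hρ.diag_nonneg)
    (Finset.mem_univ i)

end Matrix

open Matrix

lemma trFst_lmapTensorId {n m k : Type*} [Fintype n] [Fintype m] [Fintype k]
    {Φ : Matrix n n ℂ →ₗ[ℂ] Matrix m m ℂ} (hΦ : IsTracePreserving Φ)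
    (M : Matrix (n × k) (n × k) ℂ) : trFst (lmapTensorId Φ M) = trFst M := by
  ext a b
  exact hΦ fun i j => M (i, a) (j, b)

lemma trFst_vecMulVec_uVec : trFst (vecMulVec uVec (star uVec)) = (2 : ℂ)⁻¹ • 1 := by
  have h : ((√2 : ℝ) : ℂ)⁻¹ * ((√2 : ℝ) : ℂ)⁻¹ = 2⁻¹ := by
    rw [← mul_inv, ← Complex.ofReal_mul, Real.mul_self_sqrt zero_le_two, Complex.ofReal_ofNat]
  ext a b
  fin_cases a <;> fin_cases b <;> simp [trFst, vecMulVec_apply, uVec, h]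

lemma cos_sq_pi_div_eight : cos (π / 8) ^ 2 = (cos (π / 8) + sin (π / 8)) ^ 2 / 2 := by
  have h1 := cos_sq (π / 8)
  have h2 := sin_two_mul (π / 8)
  rw [show 2 * (π / 8) = π / 4 by ring, cos_pi_div_four] at h1
  rw [show 2 * (π / 8) = π / 4 by ring, sin_pi_div_four] at h2
  linear_combination h1 + h2 / 2 - sin_sq_add_cos_sq (π / 8) / 2

lemma re_star_vVec_dotProduct_mulVec_le {ρ : Matrix (Fin 2 × Fin 2) (Fin 2 × Fin 2) ℂ}
    (hρ : ρ.PosSemidef) (hmarg : trFst ρ = (2 : ℂ)⁻¹ • 1) :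
    (star vVec ⬝ᵥ ρ *ᵥ vVec).re ≤ cos (π / 8) ^ 2 := by
  set c := cos (π / 8)
  set s := sin (π / 8)
  have hexp : star vVec ⬝ᵥ ρ *ᵥ vVec = ((c ^ 2 : ℝ) : ℂ) * ρ (0, 0) (0, 0)
      + ((c * s : ℝ) : ℂ) * (ρ (0, 0) (1, 1) + ρ (1, 1) (0, 0))
      + ((s ^ 2 : ℝ) : ℂ) * ρ (1, 1) (1, 1) := by
    simp only [dotProduct, mulVec, Fintype.sum_prod_type, Fin.sum_univ_two, Pi.star_apply, vVec]
    simp only [↓reduceIte, Fin.isValue, Prod.mk.injEq, one_ne_zero, zero_ne_one, and_false,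
      and_true, RCLike.star_def, Complex.conj_ofReal, star_zero, mul_zero, zero_mul, add_zero,
      zero_add, Complex.ofReal_mul, Complex.ofReal_pow]
    ring
  have hc : 0 ≤ c :=
    cos_nonneg_of_neg_pi_div_two_le_of_le (by linarith [pi_pos]) (by linarith [pi_pos])
  have hs : 0 ≤ s := sin_nonneg_of_nonneg_of_le_pi (by positivity) (by linarith [pi_pos])
  have hdiag_le_half (a : Fin 2) (i : Fin 2) : (ρ (i, a) (i, a)).re ≤ 1 / 2 := by
    have h := Complex.le_def.1 (hρ.apply_le_trFst i a)
    simpa [hmarg] using h.1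
  calc (star vVec ⬝ᵥ ρ *ᵥ vVec).re
      = c ^ 2 * (ρ (0, 0) (0, 0)).re + c * s * ((ρ (0, 0) (1, 1)).re + (ρ (1, 1) (0, 0)).re)
        + s ^ 2 * (ρ (1, 1) (1, 1)).re := by
        simp only [hexp, Complex.add_re, Complex.re_ofReal_mul]
    _ ≤ c ^ 2 * (ρ (0, 0) (0, 0)).re + c * s * ((ρ (0, 0) (0, 0)).re + (ρ (1, 1) (1, 1)).re)
        + s ^ 2 * (ρ (1, 1) (1, 1)).re := by
        gcongr _ + c * s * ?_ + _
        exact hρ.re_apply_add_re_apply_le (0, 0) (1, 1)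
    _ = c * (c + s) * (ρ (0, 0) (0, 0)).re + s * (c + s) * (ρ (1, 1) (1, 1)).re := by ring
    _ ≤ c * (c + s) * (1 / 2) + s * (c + s) * (1 / 2) := by
        gcongr <;> apply hdiag_le_half
    _ = c ^ 2 := by rw [cos_sq_pi_div_eight]; ring

/-- For `u = (|00⟩+|11⟩)/√2` and `v = cos(π/8)|00⟩+sin(π/8)|11⟩`, every quantum channel `Φ`
on the first qubit satisfies `⟨vv*, (Φ ⊗ id)(uu*)⟩ ≤ cos²(π/8)`. -/
theorem stmt0 (Φ : Matrix (Fin 2) (Fin 2) ℂ →ₗ[ℂ] Matrix (Fin 2) (Fin 2) ℂ)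
    (hCP : IsCompletelyPositive Φ) (hTP : IsTracePreserving Φ) :
    (minner (vecMulVec vVec (star vVec)) (lmapTensorId Φ (vecMulVec uVec (star uVec)))).re ≤
      Real.cos (Real.pi / 8) ^ 2 := by
  have hρ := hCP (Fin 2) _ (posSemidef_vecMulVec_self_star uVec)
  rw [minner_vecMulVec_self_star]
  refine re_star_vVec_dotProduct_mulVec_le hρ ?_
  rw [trFst_lmapTensorId hTP, trFst_vecMulVec_uVec]

end
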